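/- arXiv:1709.06164 — 3 statements merged into one kernel-verified Lean document; each statement's English description precedes it below -/
import Mathlib

section
/- Let (𝔤, [,], β) be an involutive color hom-Lie algebra. Then its universal enveloping hom-associative color algebra (U(𝔤), φ_𝔤) is involutive, i.e. α_U² = id on U(𝔤). -/
/-! Since `α_U ∘ φ = φ ∘ β` and `β² = id`, the map `α_U²` is a hom-associative endomorphism of
`U(𝔤)` fixing `φ(𝔤)`, as is the identity; uniqueness in the universal property makes them equal. -/

/-- A hom-associative color algebra with bicharacter `ε`. -/
structure HomAssocColor (k Γ A : Type) [Field k] [AddCommGroup Γ]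
    [AddCommGroup A] [Module k A] where
  mul : A →ₗ[k] A →ₗ[k] A
  alpha : A →ₗ[k] A
  grading : Γ → Submodule k A
  ε : Γ → Γ → k
  ε_ne_zero : ∀ a b, ε a b ≠ 0
  ε_add_left : ∀ a b c, ε (a + b) c = ε a c * ε b c
  ε_add_right : ∀ a b c, ε a (b + c) = ε a b * ε a c
  ε_symm : ∀ a b, ε a b * ε b a = 1
  grade_mul : ∀ a b, ∀ x ∈ grading a, ∀ y ∈ grading b, mul x y ∈ grading (a + b)
  alpha_even : ∀ a, ∀ x ∈ grading a, alpha x ∈ grading a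
  alpha_mul : ∀ x y, alpha (mul x y) = mul (alpha x) (alpha y)
  hassoc : ∀ x y z, mul (alpha x) (mul y z) = mul (mul x y) (alpha z)

/-- A color hom-Lie algebra: `ε`-skew-symmetric bracket satisfying the `ε`-hom-Jacobi
identity, with even twist `α`. -/
structure ColorHomLie (k Γ L : Type) [Field k] [AddCommGroup Γ]
    [AddCommGroup L] [Module k L] where
  bracket : L →ₗ[k] L →ₗ[k] L
  alpha : L →ₗ[k] L
  grading : Γ → Submodule k L
  ε : Γ → Γ → k
  ε_ne_zero : ∀ a b, ε a b ≠ 0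
  ε_add_left : ∀ a b c, ε (a + b) c = ε a c * ε b c
  ε_add_right : ∀ a b c, ε a (b + c) = ε a b * ε a c
  ε_symm : ∀ a b, ε a b * ε b a = 1
  grade_bracket : ∀ a b, ∀ x ∈ grading a, ∀ y ∈ grading b, bracket x y ∈ grading (a + b)
  alpha_even : ∀ a, ∀ x ∈ grading a, alpha x ∈ grading a
  skew : ∀ a b, ∀ x ∈ grading a, ∀ y ∈ grading b, bracket x y = - ε a b • bracket y x
  jacobi : ∀ a b c, ∀ x ∈ grading a, ∀ y ∈ grading b, ∀ z ∈ grading c,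
    ε c a • bracket (alpha x) (bracket y z) + ε b c • bracket (alpha z) (bracket x y)
      + ε a b • bracket (alpha y) (bracket z x) = 0

section ColorDefs
variable {k Γ : Type} [Field k] [AddCommGroup Γ]

/-- A morphism of color hom-Lie algebras from `g` into the `ε`-antisymmetrization of a
hom-associative color algebra `As`: degree zero, intertwines twists, sends brackets
to `ε`-commutators. -/
def IsLieToAssocMorphism {L A : Type} [AddCommGroup L] [Module k L]
    [AddCommGroup A] [Module k A]
    (g : ColorHomLie k Γ L) (As : HomAssocColor k Γ A) (f : L →ₗ[k] A) : Prop :=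
  (∀ γ, ∀ x ∈ g.grading γ, f x ∈ As.grading γ) ∧
  (∀ x, f (g.alpha x) = As.alpha (f x)) ∧
  (∀ γa γb, ∀ x ∈ g.grading γa, ∀ y ∈ g.grading γb,
    f (g.bracket x y) = As.mul (f x) (f y) - g.ε γa γb • As.mul (f y) (f x))

/-- A morphism of hom-associative color algebras. -/
def IsAssocMorphism {A B : Type} [AddCommGroup A] [Module k A]
    [AddCommGroup B] [Module k B]
    (As : HomAssocColor k Γ A) (Bs : HomAssocColor k Γ B) (F : A →ₗ[k] B) : Prop :=
  (∀ γ, ∀ x ∈ As.grading γ, F x ∈ Bs.grading γ) ∧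
  (∀ x, F (As.alpha x) = Bs.alpha (F x)) ∧
  (∀ x y, F (As.mul x y) = Bs.mul (F x) (F y))

/-- `(U, Us, φ)` is a universal enveloping hom-associative color algebra of `g`. -/
def IsUEA {L : Type} [AddCommGroup L] [Module k L]
    (g : ColorHomLie k Γ L)
    (U : Type) [AddCommGroup U] [Module k U]
    (Us : HomAssocColor k Γ U) (φ : L →ₗ[k] U) : Prop :=
  Us.ε = g.ε ∧ IsLieToAssocMorphism g Us φ ∧
  ∀ (A : Type) [AddCommGroup A] [Module k A], ∀ (As : HomAssocColor k Γ A),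
    As.ε = g.ε → ∀ f : L →ₗ[k] A, IsLieToAssocMorphism g As f →
      ∃! F : U →ₗ[k] A, IsAssocMorphism Us As F ∧ F ∘ₗ φ = f

end ColorDefs

section ColorMorphisms
variable {k Γ : Type} [Field k] [AddCommGroup Γ]

theorem IsAssocMorphism.id {A : Type} [AddCommGroup A] [Module k A]
    (As : HomAssocColor k Γ A) : IsAssocMorphism As As LinearMap.id :=
  ⟨fun _ _ hx => hx, fun _ => rfl, fun _ _ => rfl⟩

theorem IsAssocMorphism.alpha {A : Type} [AddCommGroup A] [Module k A]
    (As : HomAssocColor k Γ A) : IsAssocMorphism As As As.alpha :=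
  ⟨As.alpha_even, fun _ => rfl, As.alpha_mul⟩

theorem IsAssocMorphism.comp {A B C : Type} [AddCommGroup A] [Module k A]
    [AddCommGroup B] [Module k B] [AddCommGroup C] [Module k C]
    {As : HomAssocColor k Γ A} {Bs : HomAssocColor k Γ B} {Cs : HomAssocColor k Γ C}
    {G : B →ₗ[k] C} {F : A →ₗ[k] B}
    (hG : IsAssocMorphism Bs Cs G) (hF : IsAssocMorphism As Bs F) :
    IsAssocMorphism As Cs (G ∘ₗ F) :=
  ⟨fun γ x hx => hG.1 γ _ (hF.1 γ x hx),
    fun x => by simp only [LinearMap.comp_apply, hF.2.1, hG.2.1],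
    fun x y => by simp only [LinearMap.comp_apply, hF.2.2, hG.2.2]⟩

theorem IsUEA.eq_id_of_comp_eq {L U : Type} [AddCommGroup L] [Module k L]
    [AddCommGroup U] [Module k U] {g : ColorHomLie k Γ L} {Us : HomAssocColor k Γ U}
    {φ : L →ₗ[k] U} (hU : IsUEA g U Us φ) {F : U →ₗ[k] U}
    (hF : IsAssocMorphism Us Us F) (hFφ : F ∘ₗ φ = φ) : F = LinearMap.id := by
  obtain ⟨hε, hφ, huniv⟩ := hU
  exact (huniv U Us hε φ hφ).unique ⟨hF, hFφ⟩ ⟨IsAssocMorphism.id Us, LinearMap.id_comp φ⟩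

end ColorMorphisms

theorem stmt5_general {k Γ L U : Type} [Field k] [AddCommGroup Γ] [AddCommGroup L] [Module k L]
    [AddCommGroup U] [Module k U]
    (g : ColorHomLie k Γ L) (hinv : ∀ x, g.alpha (g.alpha x) = x)
    (Us : HomAssocColor k Γ U) (φ : L →ₗ[k] U)
    (hU : IsUEA g U Us φ) :
    ∀ u, Us.alpha (Us.alpha u) = u := by
  have hφα : ∀ x, φ (g.alpha x) = Us.alpha (φ x) := hU.2.1.2.1
  have hα2φ : (Us.alpha ∘ₗ Us.alpha) ∘ₗ φ = φ := by
    ext x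
    simp only [LinearMap.comp_apply, ← hφα, hinv]
  intro u
  exact LinearMap.congr_fun
    (hU.eq_id_of_comp_eq ((IsAssocMorphism.alpha Us).comp (IsAssocMorphism.alpha Us)) hα2φ) u

/-- the universal enveloping hom-associative color algebra of an
involutive color hom-Lie algebra is involutive. -/
theorem stmt5 {k Γ L U : Type} [Field k] [AddCommGroup Γ] [AddCommGroup L] [Module k L]
    [AddCommGroup U] [Module k U]
    (g : ColorHomLie k Γ L) (hinv : ∀ x, g.alpha (g.alpha x) = x)
    (Us : HomAssocColor k Γ U) (φ : L →ₗ[k] U)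
    (hU : IsUEA g U Us φ)
    (hgen : ∀ S : Submodule k U, LinearMap.range φ ≤ S →
      (∀ x ∈ S, ∀ y ∈ S, Us.mul x y ∈ S) → (∀ x ∈ S, Us.alpha x ∈ S) → ∀ u, u ∈ S) :
    ∀ u, Us.alpha (Us.alpha u) = u :=
  stmt5_general g hinv Us φ hU
end

section
/- Let (𝔤, β) be an involutive hom-module and θ as above. For u = u₁⊗⋯⊗u_j ∈ 𝔤^{⊗j} and w = w₁⊗⋯⊗w_l ∈ 𝔤^{⊗l}, one has θ(u ⊗ w) = θ(u) ⊗ α_T^{j-1}(w₁) ⊗ α_T^{j}(w₂) ⊗ ⋯ ⊗ α_T^{j+l-2}(w_l). -/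
section Core
variable (k : Type) [CommRing k] {M : Type} [AddCommGroup M] [Module k M]

/-- pure tensor of a list, inside the tensor algebra -/
def ptensor (l : List M) : TensorAlgebra k M :=
  (l.map (fun m => TensorAlgebra.ι k m)).prod

/-- multiplicative extension `α_T` of `α` to the tensor algebra -/
def homT (α : M →ₗ[k] M) : TensorAlgebra k M →ₐ[k] TensorAlgebra k M :=
  TensorAlgebra.lift k ((TensorAlgebra.ι k).comp α)

/-- the list-level formula for `x ⊙ y = α_T^{i-1}(x) ⊗ y₁ ⊗ α_T(y₂⊗⋯⊗y_j)`,
where `i` is the length of `x` -/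
def odotList (α : M →ₗ[k] M) (x y : List M) : List M :=
  match y with
  | [] => x
  | y1 :: ys => x.map ((fun m => α m)^[x.length - 1]) ++ y1 :: ys.map (fun m => α m)

/-- the positional twist operator `θ` on pure tensors: apply `α` to the factors in
(1-based) positions `n = 2k+1` with `k ≥ 1`, i.e. 0-based even indices `≥ 2` -/
def thetaList (α : M →ₗ[k] M) (l : List M) : List M :=
  l.mapIdx (fun n m => if n % 2 = 0 ∧ 2 ≤ n then α m else m)

/-- the span of pure tensors of length `i`, i.e. `M^{⊗ i}` inside the tensor algebra -/
def gpow (i : ℕ) : Submodule k (TensorAlgebra k M) :=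
  Submodule.span k {z | ∃ l : List M, l.length = i ∧ z = ptensor k l}

/-- the span of nonempty pure tensors, i.e. `T(M) = ⊕_{i ≥ 1} M^{⊗ i}` -/
def Tplus : Submodule k (TensorAlgebra k M) :=
  Submodule.span k {z | ∃ l : List M, l ≠ [] ∧ z = ptensor k l}

end Core

/-!
The `i`-th factor of `w` sits at 0-based position `j + i` of `u ++ w`, where `θ` applies `α`
exactly when `j + i` is even (as `j ≥ 1`, an even position is automatically `≥ 2`). Since `α` is
an involution, `α^[j - 1 + i]` is `α` when `j + i` is even and the identity otherwise.
-/

theorem thetaList_append (k : Type) [CommRing k] {M : Type} [AddCommGroup M] [Module k M]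
    (α : M →ₗ[k] M) (u w : List M) :
    thetaList k α (u ++ w) = thetaList k α u ++
      w.mapIdx (fun i m => if (i + u.length) % 2 = 0 ∧ 2 ≤ i + u.length then α m else m) :=
  List.mapIdx_append

theorem Function.Involutive.iterate_apply_eq_ite {X : Type*} {f : X → X}
    (hf : Function.Involutive f) (n : ℕ) (x : X) :
    f^[n] x = if Even n then x else f x := by
  split_ifs with hn
  · rw [hf.iterate_even hn, id]
  · rw [hf.iterate_odd (Nat.not_even_iff_odd.mp hn)]

/-- `θ(u ⊗ w) = θ(u) ⊗ α_T^{j-1}(w₁) ⊗ α_T^{j}(w₂) ⊗ ⋯ ⊗ α_T^{j+l-2}(w_l)`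
for pure tensors `u` of length `j ≥ 1` and `w` of length `l`. -/
theorem stmt11 (k : Type) [CommRing k] {M : Type} [AddCommGroup M] [Module k M]
    (α : M →ₗ[k] M) (hinv : ∀ m, α (α m) = m) (u w : List M) (hu : u ≠ []) :
    ptensor k (thetaList k α (u ++ w)) =
      ptensor k (thetaList k α u ++
        w.mapIdx (fun i m => (fun v => α v)^[u.length - 1 + i] m)) := by
  have hj : 1 ≤ u.length := List.length_pos_iff.mpr hu
  have hα : Function.Involutive (fun v => α v) := hinv
  rw [thetaList_append]
  congr 3
  funext i m
  simp only [hα.iterate_apply_eq_ite, Nat.even_iff]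
  split_ifs <;> first | rfl | omega
end

section
/- Let (A, μ, α) be a hom-associative color algebra with bicharacter ε. Define [x, y]_A := μ(x,y) − ε(x,y) μ(y,x) on homogeneous elements. Then (A, [,]_A, ε, α) is a color hom-Lie algebra: the bracket is ε-skew-symmetric and satisfies the ε-hom-Jacobi identity ∑_{cyclic{x,y,z}} ε(z,x)[α(x),[y,z]_A]_A = 0. -/
/-!
Expanding a double bracket `[α x, [y, z]]` and moving each term into the form `(u v) (α w)` by
hom-associativity, the twelve terms of the cyclic sum cancel in pairs, the bicharacter relations
`ε(a, b) ε(b, a) = 1` and `ε(a, b + c) = ε(a, b) ε(a, c)` matching their coefficients.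
-/

namespace HomAssocColor

variable {k Γ A : Type} [Field k] [AddCommGroup Γ] [AddCommGroup A] [Module k A]
  (As : HomAssocColor k Γ A)

/-- The degrees `a` of `x` and `b` of `y` are explicit arguments; on homogeneous elements this is
`[x, y] = x y - ε(x, y) y x`. -/
def commutator (a b : Γ) (x y : A) : A :=
  As.mul x y - As.ε a b • As.mul y x

theorem ε_swap (a b : Γ) : As.ε b a = (As.ε a b)⁻¹ :=
  eq_inv_of_mul_eq_one_right (As.ε_symm a b)

theorem commutator_mem_grading {a b : Γ} {x y : A} (hx : x ∈ As.grading a)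
    (hy : y ∈ As.grading b) : As.commutator a b x y ∈ As.grading (a + b) := by
  have hyx : As.mul y x ∈ As.grading (a + b) := add_comm b a ▸ As.grade_mul b a y hy x hx
  exact sub_mem (As.grade_mul a b x hx y hy) (Submodule.smul_mem _ _ hyx)

theorem commutator_eq_neg_smul_commutator (a b : Γ) (x y : A) :
    As.commutator a b x y = -As.ε a b • As.commutator b a y x := by
  have := As.ε_ne_zero a b
  simp only [commutator, As.ε_swap a b]
  match_scalars <;> field_simp

theorem commutator_alpha_commutator (a b c : Γ) (x y z : A) :
    As.commutator a (b + c) (As.alpha x) (As.commutator b c y z) =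
      As.mul (As.mul x y) (As.alpha z) - As.ε b c • As.mul (As.mul x z) (As.alpha y)
        - As.ε a b • As.ε a c • As.mul (As.mul y z) (As.alpha x)
        + As.ε a b • As.ε a c • As.ε b c • As.mul (As.mul z y) (As.alpha x) := by
  simp only [commutator, map_sub, map_smul, LinearMap.sub_apply, LinearMap.smul_apply,
    As.hassoc, As.ε_add_right, smul_sub, smul_smul]
  module

theorem commutator_jacobi (a b c : Γ) (x y z : A) :
    As.ε c a • As.commutator a (b + c) (As.alpha x) (As.commutator b c y z)
      + As.ε b c • As.commutator c (a + b) (As.alpha z) (As.commutator a b x y)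
      + As.ε a b • As.commutator b (c + a) (As.alpha y) (As.commutator c a z x) = 0 := by
  have := As.ε_ne_zero a b
  have := As.ε_ne_zero b c
  have := As.ε_ne_zero c a
  simp only [commutator_alpha_commutator, As.ε_swap a b, As.ε_swap b c, As.ε_swap c a,
    smul_add, smul_sub, smul_smul]
  match_scalars <;> field_simp <;> ring

end HomAssocColor

/-- the `ε`-antisymmetrization `[x,y] = xy − ε(x,y)yx` of a
hom-associative color algebra is a color hom-Lie algebra. -/
theorem stmt19 {k Γ A : Type} [Field k] [AddCommGroup Γ] [AddCommGroup A] [Module k A]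
    (As : HomAssocColor k Γ A)
    (br : Γ → Γ → A → A → A)
    (hbr : ∀ a b x y, br a b x y = As.mul x y - As.ε a b • As.mul y x) :
    (∀ a b, ∀ x ∈ As.grading a, ∀ y ∈ As.grading b, br a b x y ∈ As.grading (a + b)) ∧
    (∀ a b, ∀ x ∈ As.grading a, ∀ y ∈ As.grading b,
      br a b x y = - As.ε a b • br b a y x) ∧
    (∀ a b c, ∀ x ∈ As.grading a, ∀ y ∈ As.grading b, ∀ z ∈ As.grading c,
      As.ε c a • br a (b + c) (As.alpha x) (br b c y z)
        + As.ε b c • br c (a + b) (As.alpha z) (br a b x y)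
        + As.ε a b • br b (c + a) (As.alpha y) (br c a z x) = 0) := by
  obtain rfl : br = As.commutator := by
    funext a b x y
    exact hbr a b x y
  exact ⟨fun a b x hx y hy => As.commutator_mem_grading hx hy,
    fun a b x _ y _ => As.commutator_eq_neg_smul_commutator a b x y,
    fun a b c x _ y _ z _ => As.commutator_jacobi a b c x y z⟩
end
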